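/- Let T be a tree on p vertices with k pendant (degree-1) vertices and diameter d. Then 2·W_ε(T) ≤ k·ε*(T) + d·k·(p−k−1) − k·(p−k). Equality holds if T is the star K_{1,p−1}. -/

import Mathlib

/-!
In a tree every eccentric vertex is a leaf. Hence an entry `ε(u, v)` of the eccentricity matrix
vanishes unless `u` or `v` is a leaf, never exceeds `e(u)`, and is at most `e(u) - 1` when `u` is
a leaf and `v` is not. Summing these entrywise bounds gives
`k ε*(T) + (p - k - 1) ∑_{u leaf} e(u) - k (p - k)`, and `e(u) ≤ d` finishes the proof as soon
as `p - k - 1 ≥ 0`; the only tree with `k = p` is `K₂`, where all eccentricities equal `d`.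
In a star every entrywise bound is attained, and `p - k - 1 = 0` unless the star is `K₂`.
-/

open Finset

namespace EccPaper

variable {V : Type*}

noncomputable def ecc [Fintype V] (G : SimpleGraph V) (v : V) : ℕ :=
  Finset.univ.sup (fun u => G.dist v u)

noncomputable def graphDiam [Fintype V] (G : SimpleGraph V) : ℕ :=
  Finset.univ.sup (fun v => ecc G v)

noncomputable def eccMatR [Fintype V] (G : SimpleGraph V) : Matrix V V ℝ :=
  fun u v => if G.dist u v = min (ecc G u) (ecc G v) then (G.dist u v : ℝ) else 0

noncomputable def eccWiener [Fintype V] (G : SimpleGraph V) : ℝ :=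
  (∑ u, ∑ v, eccMatR G u v) / 2

noncomputable def totalEcc [Fintype V] (G : SimpleGraph V) : ℝ :=
  ∑ v, (ecc G v : ℝ)

noncomputable def eccConnIndex [Fintype V] (G : SimpleGraph V) [DecidableRel G.Adj] : ℝ :=
  ∑ v, (G.degree v : ℝ) * (ecc G v : ℝ)

lemma eccMatR_isHermitian [Fintype V] (G : SimpleGraph V) : (eccMatR G).IsHermitian := by
  ext i j
  simp only [eccMatR, Matrix.conjTranspose_apply, starRingEnd_apply, star_trivial]
  rw [SimpleGraph.dist_comm, min_comm]

noncomputable def eccEnergy [Fintype V] [DecidableEq V] (G : SimpleGraph V) : ℝ :=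
  ∑ i, |(eccMatR_isHermitian G).eigenvalues i|

noncomputable def eccSpecRadius [Fintype V] [DecidableEq V] (G : SimpleGraph V) : ℝ :=
  ⨆ i, |(eccMatR_isHermitian G).eigenvalues i|

def eccGraph [Fintype V] (G : SimpleGraph V) : SimpleGraph V where
  Adj u v := u ≠ v ∧ G.dist u v = min (ecc G u) (ecc G v)
  symm := ⟨by
    rintro u v ⟨h1, h2⟩
    exact ⟨h1.symm, by rwa [SimpleGraph.dist_comm, min_comm]⟩⟩
  loopless := ⟨fun v h => h.1 rfl⟩

def IsIrreducible [Fintype V] (M : Matrix V V ℝ) : Prop :=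
  ¬ ∃ S : Set V, S.Nonempty ∧ S ≠ Set.univ ∧ ∀ i ∈ S, ∀ j ∉ S, M i j = 0

def centralGraph [DecidableEq V] (G : SimpleGraph V) [DecidableRel G.Adj] :
    SimpleGraph (V ⊕ G.edgeSet) where
  Adj x y :=
    match x, y with
    | Sum.inl u, Sum.inl v => u ≠ v ∧ ¬ G.Adj u v
    | Sum.inl u, Sum.inr e => u ∈ (e : Sym2 V)
    | Sum.inr e, Sum.inl u => u ∈ (e : Sym2 V)
    | Sum.inr _, Sum.inr _ => False
  symm := ⟨by
    rintro (u | e) (v | f) h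
    · exact ⟨h.1.symm, fun hadj => h.2 hadj.symm⟩
    · exact h
    · exact h
    · exact h⟩
  loopless := ⟨by
    rintro (u | e) h
    · exact h.1 rfl
    · exact h⟩

open SimpleGraph

section Graph

variable {G : SimpleGraph V} {c u v : V}

theorem degree_eq_one_of_forall_adj_dist_le [Fintype (G.neighborSet v)] (hG : G.IsTree)
    (huv : u ≠ v) (hmax : ∀ w, G.Adj v w → G.dist u w ≤ G.dist u v) : G.degree v = 1 := by
  classical
  obtain ⟨p, hp, hpl⟩ := hG.connected.exists_path_of_dist u v
  have hnil : ¬p.Nil := Walk.not_nil_of_ne huv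
  -- each neighbour `w` of `v` is closer to `u`, so it lies on the `u`-`v` path, next to `v`
  refine degree_eq_one_iff_existsUnique_adj.mpr
    ⟨_, (p.adj_penultimate hnil).symm, fun w hvw ↦ ?_⟩
  have hclose : G.dist u w + 1 = G.dist u v := by
    have := hmax w hvw
    rcases hG.dist_eq_dist_add_one_of_adj u hvw with h | h <;> omega
  obtain ⟨q, hq, hql⟩ := hG.connected.exists_path_of_dist u w
  have hv : v ∉ q.support := fun hv ↦ by
    have := (dist_le (q.takeUntil v hv)).trans (q.length_takeUntil_le_length hv)
    omega
  exact hG.isAcyclic.eq_penultimate_of_adj_end hp hvw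
    (hG.isAcyclic.mem_support_of_ne_mem_support_of_adj_of_isPath hp hq hvw hv)

theorem card_eq_two_of_forall_degree_eq_one [Fintype V] [DecidableRel G.Adj]
    (hG : G.IsTree) (hdeg : ∀ v, G.degree v = 1) : Fintype.card V = 2 := by
  have hsum := G.sum_degrees_eq_twice_card_edges
  have hedges := hG.card_edgeFinset
  simp only [hdeg, Finset.sum_const, Finset.card_univ, smul_eq_mul, mul_one] at hsum
  omega

theorem exists_eq_starGraph_of_iso {n : ℕ} (f : G ≃g completeBipartiteGraph (Fin 1) (Fin n)) :
    ∃ c, G = starGraph c := by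
  refine ⟨f.symm (Sum.inl 0), ?_⟩
  ext u v
  obtain ⟨x, rfl⟩ := f.symm.surjective u
  obtain ⟨y, rfl⟩ := f.symm.surjective v
  simp only [starGraph_adj, f.symm.map_adj_iff, f.symm.injective.ne_iff, f.symm.injective.eq_iff]
  rcases x with a | a <;> rcases y with b | b <;> simp [Fin.fin_one_eq_zero]

lemma dist_starGraph_center_le (c v : V) : (starGraph c).dist c v ≤ 1 := by
  rcases eq_or_ne c v with rfl | hv
  · simp
  · exact (dist_eq_one_iff_adj.mpr (starGraph_center_adj hv)).le

lemma dist_starGraph_le_two (u v : V) : (starGraph c).dist u v ≤ 2 :=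
  calc (starGraph c).dist u v ≤ (starGraph c).dist u c + (starGraph c).dist c v :=
        (connected_starGraph c).dist_triangle
    _ ≤ 1 + 1 := by
        rw [dist_comm]
        gcongr <;> exact dist_starGraph_center_le c _

end Graph

section Ecc

variable [Fintype V] {G : SimpleGraph V} {c u v : V}

lemma dist_le_ecc (G : SimpleGraph V) (u v : V) : G.dist u v ≤ ecc G u :=
  Finset.le_sup (Finset.mem_univ v)

lemma ecc_le_graphDiam (G : SimpleGraph V) (u : V) : ecc G u ≤ graphDiam G :=
  Finset.le_sup (Finset.mem_univ u)

lemma one_le_ecc_of_adj (h : G.Adj u v) : 1 ≤ ecc G u :=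
  (dist_eq_one_iff_adj.mpr h).symm.le.trans (dist_le_ecc G u v)

lemma ecc_eq_dist_of_card_eq_two (hV : Fintype.card V = 2) (huv : u ≠ v) :
    ecc G u = G.dist u v := by
  classical
  have huniv : (Finset.univ : Finset V) = {u, v} :=
    (Finset.eq_univ_of_card _ (by rw [Finset.card_pair huv, hV])).symm
  simp [ecc, huniv]

lemma ecc_eq_graphDiam_of_card_eq_two (hV : Fintype.card V = 2) (u : V) :
    ecc G u = graphDiam G := by
  have hconst : ∀ w, ecc G w = ecc G u := fun w ↦ by
    rcases eq_or_ne w u with rfl | hwu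
    · rfl
    · rw [ecc_eq_dist_of_card_eq_two hV hwu, ecc_eq_dist_of_card_eq_two hV hwu.symm, dist_comm]
  simp only [graphDiam, hconst, Finset.sup_const ⟨u, Finset.mem_univ u⟩]

lemma two_mul_eccWiener (G : SimpleGraph V) : 2 * eccWiener G = ∑ u, ∑ v, eccMatR G u v := by
  rw [eccWiener]
  ring

lemma eccMatR_self (G : SimpleGraph V) (u : V) : eccMatR G u u = 0 := by
  simp [eccMatR]

lemma eccMatR_le_ecc (G : SimpleGraph V) (u v : V) : eccMatR G u v ≤ ecc G u := by
  unfold eccMatR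
  split_ifs
  · exact_mod_cast dist_le_ecc G u v
  · positivity

lemma ecc_starGraph_center (hv : v ≠ c) : ecc (starGraph c) c = 1 :=
  le_antisymm (Finset.sup_le fun w _ ↦ dist_starGraph_center_le c w)
    (one_le_ecc_of_adj (starGraph_center_adj hv.symm))

end Ecc

section Tree

variable [Fintype V] {T : SimpleGraph V} [DecidableRel T.Adj] {u v : V}

def leaves (T : SimpleGraph V) [DecidableRel T.Adj] : Finset V :=
  univ.filter (fun v => T.degree v = 1)

lemma degree_eq_one_of_dist_eq_ecc (hT : T.IsTree) (huv : u ≠ v) (h : T.dist u v = ecc T u) :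
    T.degree v = 1 :=
  degree_eq_one_of_forall_adj_dist_le hT huv fun w _ ↦ h ▸ dist_le_ecc T u w

lemma eccMatR_eq_zero_of_degree_ne_one (hT : T.IsTree) (hu : T.degree u ≠ 1)
    (hv : T.degree v ≠ 1) : eccMatR T u v = 0 := by
  rcases eq_or_ne u v with rfl | huv
  · exact eccMatR_self T u
  refine if_neg fun h ↦ ?_
  rcases min_choice (ecc T u) (ecc T v) with hmin | hmin <;> rw [hmin] at h
  · exact hv (degree_eq_one_of_dist_eq_ecc hT huv h)
  · exact hu (degree_eq_one_of_dist_eq_ecc hT huv.symm (dist_comm.trans h))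

lemma eccMatR_le_ecc_sub_one (hT : T.IsTree) (hu : T.degree u = 1) (hv : T.degree v ≠ 1) :
    eccMatR T u v ≤ ecc T u - 1 := by
  obtain ⟨w, hw⟩ := T.degree_pos_iff_exists_adj u |>.mp (by omega)
  have hecc : (1 : ℝ) ≤ ecc T u := by exact_mod_cast one_le_ecc_of_adj hw
  unfold eccMatR
  split_ifs
  · rcases eq_or_ne u v with rfl | huv
    · exact absurd hu hv
    have hlt : T.dist u v < ecc T u := (dist_le_ecc T u v).lt_of_ne
      fun h ↦ hv (degree_eq_one_of_dist_eq_ecc hT huv h)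
    have : ((T.dist u v + 1 : ℕ) : ℝ) ≤ ecc T u := by exact_mod_cast hlt
    push_cast at this
    linarith
  · linarith

noncomputable def eccWienerBound (T : SimpleGraph V) [DecidableRel T.Adj] : ℝ :=
  #(leaves T) * totalEcc T + graphDiam T * #(leaves T) * (Fintype.card V - #(leaves T) - 1) -
    #(leaves T) * (Fintype.card V - #(leaves T))

lemma sum_ecc_leaves_of_forall_degree_eq_one (hT : T.IsTree) (hdeg : ∀ v, T.degree v = 1) :
    ∑ u ∈ leaves T, (ecc T u : ℝ) = #(leaves T) * graphDiam T := by
  have hV := card_eq_two_of_forall_degree_eq_one hT hdeg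
  simp [leaves, hdeg, ecc_eq_graphDiam_of_card_eq_two hV]

lemma mul_sum_ecc_leaves_le (hT : T.IsTree) :
    (Fintype.card V - #(leaves T) - 1) * ∑ u ∈ leaves T, (ecc T u : ℝ) ≤
      (Fintype.card V - #(leaves T) - 1) * (#(leaves T) * graphDiam T) := by
  by_cases hk : #(leaves T) + 1 ≤ Fintype.card V
  · have hk' : ((#(leaves T) + 1 : ℕ) : ℝ) ≤ Fintype.card V := by exact_mod_cast hk
    push_cast at hk'
    gcongr
    · linarith
    · calc ∑ u ∈ leaves T, (ecc T u : ℝ) ≤ ∑ u ∈ leaves T, (graphDiam T : ℝ) := by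
            gcongr with u
            exact_mod_cast ecc_le_graphDiam T u
        _ = #(leaves T) * graphDiam T := by rw [Finset.sum_const, nsmul_eq_mul]
  · have hL : leaves T = univ := eq_univ_of_card _ (by have := card_le_univ (leaves T); omega)
    have hdeg : ∀ v, T.degree v = 1 := fun v ↦ by
      have hv : v ∈ leaves T := hL ▸ mem_univ v
      simpa [leaves] using hv
    rw [sum_ecc_leaves_of_forall_degree_eq_one hT hdeg]

variable [DecidableEq V]

noncomputable def eccMatBound (T : SimpleGraph V) [DecidableRel T.Adj] : Matrix V V ℝ :=
  fun u v => if u = v then 0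
    else if T.degree v = 1 then ecc T u else if T.degree u = 1 then ecc T u - 1 else 0

lemma eccMatR_le_eccMatBound (hT : T.IsTree) (u v : V) : eccMatR T u v ≤ eccMatBound T u v := by
  unfold eccMatBound
  split_ifs with huv hv hu
  · subst huv
    exact (eccMatR_self T u).le
  · exact eccMatR_le_ecc T u v
  · exact eccMatR_le_ecc_sub_one hT hu hv
  · exact (eccMatR_eq_zero_of_degree_ne_one hT hu hv).le

lemma sum_eccMatBound :
    ∑ u, ∑ v, eccMatBound T u v = #(leaves T) * totalEcc T +
      (Fintype.card V - #(leaves T) - 1) * ∑ u ∈ leaves T, (ecc T u : ℝ) -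
      #(leaves T) * (Fintype.card V - #(leaves T)) := by
  have hsplit : ∀ u v, eccMatBound T u v = (if v ∈ leaves T then (ecc T u : ℝ) else 0) +
      (if v ∈ (leaves T)ᶜ then (if u ∈ leaves T then (ecc T u : ℝ) - 1 else 0) else 0) -
      (if v = u then (if u ∈ leaves T then (ecc T u : ℝ) else 0) else 0) := by
    intro u v
    rcases eq_or_ne u v with rfl | huv
    · by_cases hu : u ∈ leaves T <;> simp [eccMatBound, hu]
    · simp only [eccMatBound, leaves, mem_compl, mem_filter, mem_univ, true_and, huv, huv.symm]
      split_ifs <;> simp_all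
  simp only [hsplit, sum_add_distrib, sum_sub_distrib, sum_ite_mem, univ_inter, sum_const,
    nsmul_eq_mul, sum_ite_eq', mem_univ, if_true, ← mul_sum]
  rw [totalEcc, card_compl, Nat.cast_sub (card_le_univ _)]
  ring

theorem two_mul_eccWiener_le (hT : T.IsTree) : 2 * eccWiener T ≤ eccWienerBound T := by
  have hentry : ∑ u, ∑ v, eccMatR T u v ≤ ∑ u, ∑ v, eccMatBound T u v :=
    Finset.sum_le_sum fun u _ ↦ Finset.sum_le_sum fun v _ ↦ eccMatR_le_eccMatBound hT u v
  have hleaves := mul_sum_ecc_leaves_le hT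
  rw [sum_eccMatBound] at hentry
  rw [two_mul_eccWiener, eccWienerBound]
  linarith

theorem two_mul_eccWiener_eq_of_eccMatR_eq (hentry : ∀ u v, eccMatR T u v = eccMatBound T u v)
    (hleaves : (Fintype.card V - #(leaves T) - 1) * ∑ u ∈ leaves T, (ecc T u : ℝ) =
      (Fintype.card V - #(leaves T) - 1) * (#(leaves T) * graphDiam T)) :
    2 * eccWiener T = eccWienerBound T := by
  simp only [two_mul_eccWiener, hentry, sum_eccMatBound, hleaves, eccWienerBound]
  ring

lemma eccMatR_eq_eccMatBound_of_forall_degree_eq_one (hT : T.IsTree)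
    (hdeg : ∀ v, T.degree v = 1) (u v : V) : eccMatR T u v = eccMatBound T u v := by
  rcases eq_or_ne u v with rfl | huv
  · simp [eccMatR_self, eccMatBound]
  have hV := card_eq_two_of_forall_degree_eq_one hT hdeg
  have hu := ecc_eq_dist_of_card_eq_two (G := T) hV huv
  have hv := ecc_eq_dist_of_card_eq_two (G := T) hV huv.symm
  rw [dist_comm] at hv
  simp [eccMatR, eccMatBound, huv, hdeg, hu, hv]

theorem two_mul_eccWiener_of_forall_degree_eq_one (hT : T.IsTree) (hdeg : ∀ v, T.degree v = 1) :
    2 * eccWiener T = eccWienerBound T :=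
  two_mul_eccWiener_eq_of_eccMatR_eq (eccMatR_eq_eccMatBound_of_forall_degree_eq_one hT hdeg)
    (by rw [sum_ecc_leaves_of_forall_degree_eq_one hT hdeg])

end Tree

section Star

variable [Fintype V] [DecidableEq V] {c u : V}

lemma ecc_starGraph_of_ne_center (hc : (starGraph c).degree c ≠ 1) (hu : u ≠ c) :
    ecc (starGraph c) u = 2 := by
  obtain ⟨w, hwc, hwu⟩ : ∃ w, w ≠ c ∧ w ≠ u := by
    by_contra! h
    exact hc (degree_eq_one_iff_existsUnique_adj.mpr
      ⟨u, starGraph_center_adj hu.symm, fun w hw ↦ h w (starGraph_adj.mp hw).1.symm⟩)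
  refine le_antisymm (Finset.sup_le fun x _ ↦ dist_starGraph_le_two u x) ?_
  calc 2 ≤ (starGraph c).dist u w :=
        (connected_starGraph c).one_lt_dist_of_ne_of_not_adj hwu.symm (by simp [hu, hwc])
    _ ≤ ecc (starGraph c) u := dist_le_ecc _ u w

lemma eccMatR_starGraph (hc : (starGraph c).degree c ≠ 1) (u v : V) :
    eccMatR (starGraph c) u v = eccMatBound (starGraph c) u v := by
  rcases eq_or_ne u v with rfl | huv
  · simp [eccMatR_self, eccMatBound]
  have hdeg : ∀ {x}, x ≠ c → (starGraph c).degree x = 1 := degree_starGraph_of_ne_center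
  rcases eq_or_ne u c with rfl | hu
  · have hdist : (starGraph u).dist u v = 1 := dist_eq_one_iff_adj.mpr (starGraph_center_adj huv)
    simp only [eccMatR, eccMatBound, hdist, ecc_starGraph_center huv.symm,
      ecc_starGraph_of_ne_center hc huv.symm, huv, hdeg huv.symm]
    norm_num
  rcases eq_or_ne v c with rfl | hv
  · have hdist : (starGraph v).dist u v = 1 :=
      dist_eq_one_iff_adj.mpr (starGraph_center_adj' hu.symm)
    simp only [eccMatR, eccMatBound, hdist, ecc_starGraph_center hu,
      ecc_starGraph_of_ne_center hc hu, huv, hc, hdeg hu]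
    norm_num
  · have hdist : (starGraph c).dist u v = 2 := le_antisymm (dist_starGraph_le_two u v)
      ((connected_starGraph c).one_lt_dist_of_ne_of_not_adj huv (by simp [hu, hv]))
    simp only [eccMatR, eccMatBound, hdist, ecc_starGraph_of_ne_center hc hu,
      ecc_starGraph_of_ne_center hc hv, huv, hdeg hv]
    norm_num

theorem two_mul_eccWiener_starGraph (c : V) :
    2 * eccWiener (starGraph c) = eccWienerBound (starGraph c) := by
  by_cases hc : (starGraph c).degree c = 1
  · have hdeg : ∀ v, (starGraph c).degree v = 1 := fun v ↦ by
      rcases eq_or_ne v c with rfl | hv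
      exacts [hc, degree_starGraph_of_ne_center hv]
    exact two_mul_eccWiener_of_forall_degree_eq_one (isTree_starGraph c) hdeg
  · have hleaves : leaves (starGraph c) = univ.erase c := by
      ext v
      rcases eq_or_ne v c with rfl | hv
      · simp [leaves, hc]
      · simp [leaves, hv, degree_starGraph_of_ne_center hv]
    have hcoef : (Fintype.card V - #(leaves (starGraph c)) - 1 : ℝ) = 0 := by
      rw [hleaves, card_erase_of_mem (mem_univ c), card_univ,
        Nat.cast_sub (Fintype.card_pos_iff.mpr ⟨c⟩)]
      ring
    exact two_mul_eccWiener_eq_of_eccMatR_eq (eccMatR_starGraph hc)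
      (by rw [hcoef, zero_mul, zero_mul])

end Star

/-- for a tree with k pendant vertices and diameter d,
2W_ε(T) ≤ k ε*(T) + d k (p-k-1) - k(p-k), with equality if T is the star. -/
theorem stmt_12 {V : Type*} [Fintype V] [DecidableEq V] (T : SimpleGraph V) [DecidableRel T.Adj]
    (ht : T.IsTree) :
    (2 * eccWiener T ≤
      ((Finset.univ.filter (fun v : V => T.degree v = 1)).card : ℝ) * totalEcc T +
      (graphDiam T : ℝ) * ((Finset.univ.filter (fun v : V => T.degree v = 1)).card : ℝ) *
        ((Fintype.card V : ℝ) - ((Finset.univ.filter (fun v : V => T.degree v = 1)).card : ℝ) - 1) -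
      ((Finset.univ.filter (fun v : V => T.degree v = 1)).card : ℝ) *
        ((Fintype.card V : ℝ) - ((Finset.univ.filter (fun v : V => T.degree v = 1)).card : ℝ))) ∧
    (Nonempty (T ≃g completeBipartiteGraph (Fin 1) (Fin (Fintype.card V - 1))) →
      2 * eccWiener T =
      ((Finset.univ.filter (fun v : V => T.degree v = 1)).card : ℝ) * totalEcc T +
      (graphDiam T : ℝ) * ((Finset.univ.filter (fun v : V => T.degree v = 1)).card : ℝ) *
        ((Fintype.card V : ℝ) - ((Finset.univ.filter (fun v : V => T.degree v = 1)).card : ℝ) - 1) -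
      ((Finset.univ.filter (fun v : V => T.degree v = 1)).card : ℝ) *
        ((Fintype.card V : ℝ) - ((Finset.univ.filter (fun v : V => T.degree v = 1)).card : ℝ))) := by
  refine ⟨two_mul_eccWiener_le ht, fun ⟨f⟩ ↦ ?_⟩
  obtain ⟨c, rfl⟩ := exists_eq_starGraph_of_iso f
  -- the `DecidableRel` instance of `T` need not be the one Mathlib puts on `starGraph c`
  convert two_mul_eccWiener_starGraph c using 1
  unfold eccWienerBound leaves
  congr!

end EccPaper
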